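/- arXiv:2108.11307 — 3 statements merged into one kernel-verified Lean document; each statement's English description precedes it below -/
import Mathlib

section
/- Let $\alpha\in(0,1)$, $\lambda>0$, $p_0\ge 0$, $T>0$, and let $w\in C^1([0,T])$ satisfy $w'(t) + p_0\,\partial_t^\alpha w(t) + \lambda w(t)\le 0$ for all $t\in(0,T]$ and $w(0)\le 0$. Then $w(t)\le 0$ for all $t\in(0,T]$. -/
/-!
Let `t₀` be a maximum point of `w` on `[0, T]`. If `w t₀ > 0`, then `t₀ > 0`, and at `t₀` both
`w'` and the Caputo derivative are nonnegative, so the left side of the inequality is at least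
`λ w t₀ > 0`. For the Caputo derivative, integrate by parts against
`G τ = (t₀ - τ) ^ (-α) * (w τ - w t₀)`: `G` vanishes at `t₀` (as `w` is differentiable there and
`α < 1`), `G 0 ≤ 0`, and
`G' τ = (t₀ - τ) ^ (-α) * w' τ + α * (t₀ - τ) ^ (-α - 1) * (w τ - w t₀) ≤ (t₀ - τ) ^ (-α) * w' τ`.
-/

open Real MeasureTheory intervalIntegral

/-- Caputo fractional derivative of order `α` of `φ` at `t`. -/
noncomputable def caputoDeriv (α : ℝ) (φ : ℝ → ℝ) (t : ℝ) : ℝ :=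
  (1 / Real.Gamma (1 - α)) * ∫ τ in (0:ℝ)..t, (t - τ) ^ (-α) * deriv φ τ

open Set Filter Topology Asymptotics

lemma HasDerivAt.nonneg_of_isMaxOn_Icc {f : ℝ → ℝ} {f' a b : ℝ} (hf : HasDerivAt f f' b)
    (hab : a < b) (hmax : IsMaxOn f (Icc a b) b) : 0 ≤ f' := by
  refine ge_of_tendsto (hasDerivAt_iff_tendsto_slope_left_right.1 hf).1 ?_
  filter_upwards [Ioo_mem_nhdsLT hab] with x hx
  rw [slope_def_field]
  exact div_nonneg_of_nonpos (sub_nonpos.2 (hmax ⟨hx.1.le, hx.2.le⟩)) (sub_nonpos.2 hx.2.le)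

lemma tendsto_sub_rpow_neg_mul_sub_nhdsLE {f : ℝ → ℝ} {x α : ℝ}
    (hf : DifferentiableAt ℝ f x) (hα : α < 1) :
    Tendsto (fun τ => (x - τ) ^ (-α) * (f τ - f x)) (𝓝[≤] x) (𝓝 0) := by
  have hbigO : (fun τ => (x - τ) ^ (-α) * (f τ - f x)) =O[𝓝[≤] x]
      fun τ => (x - τ) ^ (-α) * (τ - x) :=
    (isBigO_refl _ _).mul (hf.hasDerivAt.isBigO_sub.mono nhdsWithin_le_nhds)
  refine hbigO.trans_tendsto ?_
  have hpow : (fun τ => (x - τ) ^ (-α) * (τ - x)) =ᶠ[𝓝[≤] x]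
      fun τ => -(x - τ) ^ (1 - α) := by
    filter_upwards [self_mem_nhdsWithin] with τ hτ
    rw [show 1 - α = -α + 1 by ring, rpow_add' (sub_nonneg.2 hτ) (by linarith), rpow_one]
    ring
  have hcont : ContinuousAt (fun τ => -(x - τ) ^ (1 - α)) x :=
    ((continuousAt_const.sub continuousAt_id).rpow_const (Or.inr (by linarith))).neg
  simpa [zero_rpow (by linarith : 1 - α ≠ 0)] using
    (tendsto_congr' hpow).2 (hcont.tendsto.mono_left nhdsWithin_le_nhds)

lemma continuousOn_sub_rpow_neg_mul_sub {f : ℝ → ℝ} {a b α : ℝ} (hf : Continuous f)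
    (hfb : DifferentiableAt ℝ f b) (hα : α < 1) :
    ContinuousOn (fun τ => (b - τ) ^ (-α) * (f τ - f b)) (Icc a b) := by
  intro x hx
  rcases hx.2.lt_or_eq with hxb | rfl
  · have hpow : ContinuousAt (fun τ => (b - τ) ^ (-α)) x :=
      (continuousAt_const.sub continuousAt_id).rpow_const (Or.inl (sub_ne_zero.2 hxb.ne'))
    exact (hpow.mul (hf.sub continuous_const).continuousAt).continuousWithinAt
  · simpa [ContinuousWithinAt] using (tendsto_sub_rpow_neg_mul_sub_nhdsLE hfb hα).mono_left
      (nhdsWithin_mono _ Icc_subset_Iic_self)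

lemma hasDerivAt_sub_rpow_neg_mul_sub {f : ℝ → ℝ} {f' b α x : ℝ} (hf : HasDerivAt f f' x)
    (hx : x < b) :
    HasDerivAt (fun τ => (b - τ) ^ (-α) * (f τ - f b))
      (α * (b - x) ^ (-α - 1) * (f x - f b) + (b - x) ^ (-α) * f') x := by
  have hpow : HasDerivAt (fun τ => (b - τ) ^ (-α)) (-α * (b - x) ^ (-α - 1) * -1) x :=
    (hasDerivAt_rpow_const (Or.inl (sub_ne_zero.2 hx.ne'))).comp x
      ((hasDerivAt_id x).const_sub b)
  exact (hpow.fun_mul (hf.sub_const (f b))).congr_deriv (by ring)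

theorem integral_sub_rpow_neg_mul_deriv_nonneg_of_isMaxOn {w : ℝ → ℝ} {a b α : ℝ}
    (hw : ContDiff ℝ 1 w) (hα₀ : 0 ≤ α) (hα₁ : α < 1) (hab : a ≤ b)
    (hmax : IsMaxOn w (Icc a b) b) :
    0 ≤ ∫ τ in a..b, (b - τ) ^ (-α) * deriv w τ := by
  have hdiff : Differentiable ℝ w := hw.differentiable one_ne_zero
  have hint : IntegrableOn (fun τ => (b - τ) ^ (-α) * deriv w τ) (Icc a b) := by
    rw [← intervalIntegrable_iff_integrableOn_Icc_of_le hab]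
    have hrpow : IntervalIntegrable (fun τ => (b - τ) ^ (-α)) volume a b := by
      simpa using
        (intervalIntegrable_rpow' (a := b - a) (b := 0) (by linarith)).comp_sub_left b
    exact hrpow.mul_continuousOn (hw.continuous_deriv le_rfl).continuousOn
  have hFTC := sub_le_integral_of_hasDeriv_right_of_le hab
    (continuousOn_sub_rpow_neg_mul_sub hw.continuous (hdiff b) hα₁)
    (fun x hx =>
      (hasDerivAt_sub_rpow_neg_mul_sub (α := α) (hdiff x).hasDerivAt hx.2).hasDerivWithinAt)
    hint fun x hx => add_le_of_nonpos_left <| mul_nonpos_of_nonneg_of_nonpos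
      (mul_nonneg hα₀ (rpow_nonneg (sub_nonneg.2 hx.2.le) _))
      (sub_nonpos.2 (hmax (Ioo_subset_Icc_self hx)))
  have hwa : (b - a) ^ (-α) * (w a - w b) ≤ 0 :=
    mul_nonpos_of_nonneg_of_nonpos (rpow_nonneg (sub_nonneg.2 hab) _)
      (sub_nonpos.2 (hmax (left_mem_Icc.2 hab)))
  simp only [sub_self, mul_zero, zero_sub] at hFTC
  linarith

theorem caputoDeriv_nonneg_of_isMaxOn {w : ℝ → ℝ} {α t : ℝ} (hw : ContDiff ℝ 1 w)
    (hα₀ : 0 ≤ α) (hα₁ : α < 1) (ht : 0 ≤ t) (hmax : IsMaxOn w (Icc 0 t) t) :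
    0 ≤ caputoDeriv α w t :=
  mul_nonneg (one_div_nonneg.2 (Gamma_pos_of_pos (by linarith)).le)
    (integral_sub_rpow_neg_mul_deriv_nonneg_of_isMaxOn hw hα₀ hα₁ ht hmax)

theorem mixed_fractional_maximum_principle_general
    (α lam p₀ T : ℝ) (hα : α ∈ Set.Ioo (0:ℝ) 1) (hlam : 0 < lam) (hp₀ : 0 ≤ p₀)
    (w : ℝ → ℝ) (hw : ContDiff ℝ 1 w)
    (hineq : ∀ t, t ∈ Set.Ioc 0 T →
      deriv w t + p₀ * caputoDeriv α w t + lam * w t ≤ 0)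
    (h0 : w 0 ≤ 0) :
    ∀ t, t ∈ Set.Ioc 0 T → w t ≤ 0 := by
  intro t ht
  by_contra! hwt
  obtain ⟨t₀, ht₀, hmax⟩ := isCompact_Icc.exists_isMaxOn ⟨t, Ioc_subset_Icc_self ht⟩
    hw.continuous.continuousOn
  have hwt₀ : 0 < w t₀ := hwt.trans_le (hmax (Ioc_subset_Icc_self ht))
  have ht₀pos : 0 < t₀ := ht₀.1.lt_of_ne (by rintro rfl; linarith)
  have hmax₀ : IsMaxOn w (Icc 0 t₀) t₀ := hmax.on_subset (Icc_subset_Icc_right ht₀.2)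
  have hderiv : 0 ≤ deriv w t₀ :=
    ((hw.differentiable one_ne_zero) t₀).hasDerivAt.nonneg_of_isMaxOn_Icc ht₀pos hmax₀
  have hcaputo : 0 ≤ caputoDeriv α w t₀ :=
    caputoDeriv_nonneg_of_isMaxOn hw hα.1.le hα.2 ht₀pos.le hmax₀
  have := hineq t₀ ⟨ht₀pos, ht₀.2⟩
  linarith [mul_nonneg hp₀ hcaputo, mul_pos hlam hwt₀]

/-- Maximum principle / comparison for the mixed-order fractional ODE (Lemma 4.2, smooth case). -/
theorem mixed_fractional_maximum_principle
    (α lam p₀ T : ℝ) (hα : α ∈ Set.Ioo (0:ℝ) 1) (hlam : 0 < lam) (hp₀ : 0 ≤ p₀) (hT : 0 < T)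
    (w : ℝ → ℝ) (hw : ContDiff ℝ 1 w)
    (hineq : ∀ t, t ∈ Set.Ioc 0 T →
      deriv w t + p₀ * caputoDeriv α w t + lam * w t ≤ 0)
    (h0 : w 0 ≤ 0) :
    ∀ t, t ∈ Set.Ioc 0 T → w t ≤ 0 :=
  mixed_fractional_maximum_principle_general α lam p₀ T hα hlam hp₀ w hw hineq h0
end

section
/- Let $\alpha\in(0,1)$, $T>0$ and $w\in C^1([0,T])$. If $w$ attains its maximum over $[0,T]$ at a point $t_0\in(0,T]$ and $w(t_0)\ge w(0)$, then the Caputo derivative satisfies $\partial_t^\alpha w(t_0)\ge 0$. -/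
open Real MeasureTheory intervalIntegral

/-!
Integrate by parts against `w - w t₀` on `[0, b]` with `b < t₀`. Since `w ≤ w t₀` and the
kernel `τ ↦ (t₀ - τ) ^ (-α)` is nondecreasing, every term except the boundary term at `b` is
nonnegative, and that one, `(t₀ - b) ^ (-α) * (w b - w t₀) = O((t₀ - b) ^ (1 - α))`, vanishes
as `b → t₀⁻`.
-/

open Set Filter Topology Asymptotics

theorem intervalIntegrable_sub_rpow_neg_mul {α a t : ℝ} {f : ℝ → ℝ} (hα : α < 1)
    (hf : ContinuousOn f (uIcc a t)) :
    IntervalIntegrable (fun τ => (t - τ) ^ (-α) * f τ) volume a t := by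
  have hpow : IntervalIntegrable (fun x : ℝ => x ^ (-α)) volume 0 (t - a) :=
    intervalIntegrable_rpow' (by linarith)
  have h := hpow.comp_sub_left t
  simp only [sub_zero, sub_sub_cancel] at h
  exact h.symm.mul_continuousOn hf

theorem hasDerivAt_sub_rpow_neg {α t x : ℝ} (hx : x < t) :
    HasDerivAt (fun τ => (t - τ) ^ (-α)) (α * (t - x) ^ (-α - 1)) x := by
  have h := ((hasDerivAt_id' x).const_sub t).rpow_const (p := -α) (Or.inl (sub_pos.2 hx).ne')
  convert h using 1
  ring

theorem sub_rpow_neg_mul_sub_le_integral {α a b t : ℝ} {w w' : ℝ → ℝ} (hα : 0 ≤ α)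
    (hab : a ≤ b) (hbt : b < t) (hw : ∀ x ∈ Icc a b, HasDerivAt w (w' x) x)
    (hw' : IntervalIntegrable w' volume a b) (hle : ∀ x ∈ Icc a b, w x ≤ w t) :
    (t - b) ^ (-α) * (w b - w t) ≤ ∫ τ in a..b, (t - τ) ^ (-α) * w' τ := by
  have hkernel : ∀ x ∈ Icc a b, HasDerivAt (fun τ => (t - τ) ^ (-α)) (α * (t - x) ^ (-α - 1)) x :=
    fun x hx => hasDerivAt_sub_rpow_neg (hx.2.trans_lt hbt)
  have hkernel' : IntervalIntegrable (fun x => α * (t - x) ^ (-α - 1)) volume a b := by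
    refine ContinuousOn.intervalIntegrable fun x hx => ?_
    rw [uIcc_of_le hab] at hx
    exact (continuousAt_const.mul ((continuousAt_const.sub continuousAt_id).rpow_const
      (Or.inl (sub_pos.2 (hx.2.trans_lt hbt)).ne'))).continuousWithinAt
  have hparts := integral_mul_deriv_eq_deriv_mul (uIcc_of_le hab ▸ hkernel)
    (fun x hx => (hw x (uIcc_of_le hab ▸ hx)).sub_const (w t)) hkernel' hw'
  rw [hparts]
  have hleft : (t - a) ^ (-α) * (w a - w t) ≤ 0 :=
    mul_nonpos_of_nonneg_of_nonpos (rpow_nonneg (by linarith) _)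
      (sub_nonpos.2 (hle a ⟨le_rfl, hab⟩))
  have hrest : ∫ x in a..b, α * (t - x) ^ (-α - 1) * (w x - w t) ≤ 0 := by
    have h : 0 ≤ ∫ x in a..b, -(α * (t - x) ^ (-α - 1) * (w x - w t)) :=
      integral_nonneg hab fun x hx => neg_nonneg.2 <| mul_nonpos_of_nonneg_of_nonpos
        (mul_nonneg hα (rpow_nonneg (sub_pos.2 (hx.2.trans_lt hbt)).le _)) (sub_nonpos.2 (hle x hx))
    rw [intervalIntegral.integral_neg] at h
    linarith
  linarith

theorem tendsto_sub_rpow_neg_mul_sub_nhdsLT {α t w' : ℝ} {w : ℝ → ℝ} (hα : α < 1)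
    (hw : HasDerivAt w w' t) :
    Tendsto (fun b => (t - b) ^ (-α) * (w b - w t)) (𝓝[<] t) (𝓝 0) := by
  have hO : (fun b => (t - b) ^ (-α) * (w b - w t)) =O[𝓝[<] t]
      fun b => (t - b) ^ (-α) * (b - t) :=
    (isBigO_refl _ _).mul (hw.isBigO_sub.mono nhdsWithin_le_nhds)
  refine hO.trans_tendsto ?_
  have hpow : Tendsto (fun b => -(t - b) ^ (1 - α)) (𝓝[<] t) (𝓝 0) := by
    have h : Continuous fun b => -(t - b) ^ (1 - α) :=
      ((continuous_const.sub continuous_id).rpow_const fun _ => Or.inr (by linarith)).neg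
    simpa [zero_rpow (by linarith : (1:ℝ) - α ≠ 0)] using (h.tendsto t).mono_left nhdsWithin_le_nhds
  refine hpow.congr' (eventually_nhdsWithin_of_forall fun b (hb : b < t) => ?_)
  rw [show (1:ℝ) - α = -α + 1 by ring, rpow_add (sub_pos.2 hb), rpow_one]
  ring

theorem integral_sub_rpow_neg_mul_nonneg_of_isMaxOn {α a t : ℝ} {w w' : ℝ → ℝ}
    (hα : α ∈ Ico (0:ℝ) 1) (hat : a < t) (hw : ∀ x ∈ Icc a t, HasDerivAt w (w' x) x)
    (hw' : ContinuousOn w' (Icc a t)) (hmax : IsMaxOn w (Icc a t) t) :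
    0 ≤ ∫ τ in a..t, (t - τ) ^ (-α) * w' τ := by
  have hint := intervalIntegrable_sub_rpow_neg_mul hα.2 (uIcc_of_le hat.le ▸ hw')
  have hprim : Tendsto (fun b => ∫ τ in a..b, (t - τ) ^ (-α) * w' τ) (𝓝[<] t)
      (𝓝 (∫ τ in a..t, (t - τ) ^ (-α) * w' τ)) := by
    have h := (continuousOn_primitive_interval' hint left_mem_uIcc) t right_mem_uIcc
    rw [ContinuousWithinAt, uIcc_of_le hat.le, nhdsWithin_Icc_eq_nhdsLE hat] at h
    exact h.mono_left (nhdsWithin_mono _ Iio_subset_Iic_self)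
  have hboundary := tendsto_sub_rpow_neg_mul_sub_nhdsLT hα.2 (hw t ⟨hat.le, le_rfl⟩)
  refine le_of_tendsto_of_tendsto hboundary hprim ?_
  filter_upwards [Ioo_mem_nhdsLT hat] with b hb
  exact sub_rpow_neg_mul_sub_le_integral hα.1 hb.1.le hb.2
    (fun x hx => hw x ⟨hx.1, hx.2.trans hb.2.le⟩)
    ((hw'.mono (Icc_subset_Icc_right hb.2.le)).intervalIntegrable_of_Icc hb.1.le)
    (fun x hx => hmax ⟨hx.1, hx.2.trans hb.2.le⟩)

theorem caputo_extremum_principle_general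
    (α T : ℝ) (hα : α ∈ Set.Ioo (0:ℝ) 1)
    (w : ℝ → ℝ) (hw : ContDiff ℝ 1 w)
    (t₀ : ℝ) (ht₀ : t₀ ∈ Set.Ioc 0 T)
    (hmax : ∀ t, t ∈ Set.Icc 0 T → w t ≤ w t₀) :
    0 ≤ caputoDeriv α w t₀ := by
  have hGamma : 0 < Gamma (1 - α) := Gamma_pos_of_pos (by linarith [hα.2])
  refine mul_nonneg (one_div_nonneg.2 hGamma.le) ?_
  exact integral_sub_rpow_neg_mul_nonneg_of_isMaxOn (Ioo_subset_Ico_self hα) ht₀.1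
    (fun x _ => (hw.differentiable one_ne_zero x).hasDerivAt)
    (hw.continuous_deriv le_rfl).continuousOn
    (fun x hx => hmax x ⟨hx.1, hx.2.trans ht₀.2⟩)

/-- Extremum principle for the Caputo derivative (Luchko). -/
theorem caputo_extremum_principle
    (α T : ℝ) (hα : α ∈ Set.Ioo (0:ℝ) 1) (hT : 0 < T)
    (w : ℝ → ℝ) (hw : ContDiff ℝ 1 w)
    (t₀ : ℝ) (ht₀ : t₀ ∈ Set.Ioc 0 T)
    (hmax : ∀ t, t ∈ Set.Icc 0 T → w t ≤ w t₀)
    (h0 : w 0 ≤ w t₀) :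
    0 ≤ caputoDeriv α w t₀ :=
  caputo_extremum_principle_general α T hα w hw t₀ ht₀ hmax
end

section
/- Let $\alpha\in(0,1)$, $q_1>0$, $\lambda>0$, $v_0\ne 0$ and define $v(t):= v_0\int_0^\infty e^{-rt} H_{\alpha,0}^{(1)}(r;q_1,\lambda)\,dr$, where $H_{\alpha,0}^{(1)}(r;q_1,\lambda) := \frac{1}{\pi}\frac{\lambda q_1 r^{\alpha-1}\sin(\alpha\pi)}{(\lambda-r)^2 + q_1^2 r^{2\alpha} + 2(\lambda-r)q_1 r^\alpha\cos(\alpha\pi)}$. Then for every $t_0>0$ there exists $c>0$ such that $|v(t)|\ge c|v_0| t^{-\alpha}$ for all $t\ge t_0$; i.e., the decay rate $t^{-\alpha}$ is sharp. -/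
open Real MeasureTheory

/-- Spectral density for the mixed-order fractional relaxation equation. -/
noncomputable def spectralH (α q₁ lam r : ℝ) : ℝ :=
  (1 / Real.pi) * (lam * q₁ * r ^ (α - 1) * Real.sin (α * Real.pi)) /
    ((lam - r) ^ 2 + q₁ ^ 2 * r ^ (2 * α) + 2 * (lam - r) * q₁ * r ^ α * Real.cos (α * Real.pi))

private lemma rpow_two_mul {r : ℝ} (hr : 0 < r) (α : ℝ) : r ^ (2*α) = (r ^ α) ^ 2 := by
  rw [two_mul, Real.rpow_add hr]; ring

private lemma denom_lb1 (α q₁ lam r : ℝ) (hr : 0 < r) :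
    (q₁ * r ^ α * Real.sin (α * Real.pi)) ^ 2
      ≤ (lam - r) ^ 2 + q₁ ^ 2 * r ^ (2 * α)
        + 2 * (lam - r) * q₁ * r ^ α * Real.cos (α * Real.pi) := by
  rw [rpow_two_mul hr]
  nlinarith [sq_nonneg ((lam - r) + q₁ * r ^ α * Real.cos (α * Real.pi)),
    Real.sin_sq_add_cos_sq (α * Real.pi), sq_nonneg (q₁ * r ^ α)]

private lemma denom_lb2 (α q₁ lam r : ℝ) (hr : 0 < r) :
    ((lam - r) * Real.sin (α * Real.pi)) ^ 2
      ≤ (lam - r) ^ 2 + q₁ ^ 2 * r ^ (2 * α)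
        + 2 * (lam - r) * q₁ * r ^ α * Real.cos (α * Real.pi) := by
  rw [rpow_two_mul hr]
  nlinarith [sq_nonneg ((lam - r) * Real.cos (α * Real.pi) + q₁ * r ^ α),
    Real.sin_sq_add_cos_sq (α * Real.pi), sq_nonneg (lam - r)]

private lemma denom_ub (α q₁ lam r : ℝ) (hα0 : 0 < α) (hq₁ : 0 < q₁) (hlam : 0 < lam)
    (hr : 0 < r) (hr1 : r ≤ 1) (hrl : r ≤ lam) :
    (lam - r) ^ 2 + q₁ ^ 2 * r ^ (2 * α)
        + 2 * (lam - r) * q₁ * r ^ α * Real.cos (α * Real.pi) ≤ (lam + q₁) ^ 2 := by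
  rw [rpow_two_mul hr]
  have hb0 : 0 < r ^ α := Real.rpow_pos_of_pos hr α
  have hb1 : r ^ α ≤ 1 := Real.rpow_le_one hr.le hr1 hα0.le
  have hc1 : Real.cos (α * Real.pi) ≤ 1 := Real.cos_le_one _
  have hcn : -1 ≤ Real.cos (α * Real.pi) := Real.neg_one_le_cos _
  have h1 : 0 ≤ lam - r := by linarith
  nlinarith [mul_pos hq₁ hb0, mul_nonneg (mul_nonneg h1 hq₁.le) hb0.le,
    mul_nonneg (mul_nonneg h1 hq₁.le) (sub_nonneg.2 hb1),
    mul_nonneg hq₁.le (sub_nonneg.2 hb1)]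

/-- Sharpness of the decay rate `t^{-α}` (Lemma A.1, lower bound). -/
theorem fractional_ode_decay_sharp
    (α q₁ lam v₀ : ℝ) (hα : α ∈ Set.Ioo (0:ℝ) 1) (hq₁ : 0 < q₁) (hlam : 0 < lam)
    (hv₀ : v₀ ≠ 0) :
    ∀ t₀ : ℝ, 0 < t₀ → ∃ c : ℝ, 0 < c ∧
      ∀ t, t₀ ≤ t →
        c * |v₀| * t ^ (-α) ≤
          |v₀ * ∫ r in Set.Ioi (0:ℝ), Real.exp (-r * t) * spectralH α q₁ lam r| := by
  obtain ⟨hα0, hα1⟩ := hα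
  intro t₀ ht₀
  have hπ : (0:ℝ) < Real.pi := Real.pi_pos
  have hs : 0 < Real.sin (α * Real.pi) :=
    Real.sin_pos_of_pos_of_lt_pi (by positivity) (by nlinarith)
  -- positivity of the denominator
  have hDpos : ∀ r : ℝ, 0 < r →
      0 < (lam - r) ^ 2 + q₁ ^ 2 * r ^ (2 * α)
        + 2 * (lam - r) * q₁ * r ^ α * Real.cos (α * Real.pi) := by
    intro r hr
    have hb0 : 0 < r ^ α := Real.rpow_pos_of_pos hr α
    have h0 : 0 < (q₁ * r ^ α * Real.sin (α * Real.pi)) ^ 2 :=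
      pow_pos (mul_pos (mul_pos hq₁ hb0) hs) 2
    linarith [denom_lb1 α q₁ lam r hr]
  -- nonnegativity of spectralH
  have hHnn : ∀ r : ℝ, 0 < r → 0 ≤ spectralH α q₁ lam r := by
    intro r hr
    have hb : 0 ≤ r ^ (α - 1) := Real.rpow_nonneg hr.le _
    exact div_nonneg (by positivity) (hDpos r hr).le
  -- constants
  set δ : ℝ := min 1 (lam / 2) with hδ_def
  have hδ0 : 0 < δ := lt_min one_pos (half_pos hlam)
  set c' : ℝ := lam * q₁ * Real.sin (α * Real.pi) / (Real.pi * (lam + q₁) ^ 2) with hc'_def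
  have hc'0 : 0 < c' := by rw [hc'_def]; positivity
  set C₂ : ℝ := lam / (Real.pi * q₁ * Real.sin (α * Real.pi)) * (lam / 2) ^ (-α - 1)
    with hC₂_def
  -- lower bound for spectralH near 0
  have hHlb : ∀ r : ℝ, 0 < r → r ≤ δ → c' * r ^ (α - 1) ≤ spectralH α q₁ lam r := by
    intro r hr hrδ
    have hr1 : r ≤ 1 := le_trans hrδ (min_le_left _ _)
    have hrl : r ≤ lam := le_trans (le_trans hrδ (min_le_right _ _)) (by linarith)
    have hub := denom_ub α q₁ lam r hα0 hq₁ hlam hr hr1 hrl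
    have hb : 0 ≤ r ^ (α - 1) := Real.rpow_nonneg hr.le _
    have hnum : 0 ≤ (1 / Real.pi) * (lam * q₁ * r ^ (α - 1) * Real.sin (α * Real.pi)) := by
      positivity
    calc c' * r ^ (α - 1)
        = (1 / Real.pi) * (lam * q₁ * r ^ (α - 1) * Real.sin (α * Real.pi)) / (lam + q₁) ^ 2 := by
          rw [hc'_def]; field_simp
      _ ≤ (1 / Real.pi) * (lam * q₁ * r ^ (α - 1) * Real.sin (α * Real.pi)) /
          ((lam - r) ^ 2 + q₁ ^ 2 * r ^ (2 * α)
            + 2 * (lam - r) * q₁ * r ^ α * Real.cos (α * Real.pi)) :=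
          div_le_div_of_nonneg_left hnum (hDpos r hr) hub
      _ = spectralH α q₁ lam r := rfl
  -- upper bound on (0, lam/2]
  have hHub1 : ∀ r : ℝ, 0 < r → r ≤ lam / 2 →
      spectralH α q₁ lam r
        ≤ lam * q₁ / (Real.pi * (lam / 2) ^ 2 * Real.sin (α * Real.pi)) * r ^ (α - 1) := by
    intro r hr hrl
    have hb : 0 ≤ r ^ (α - 1) := Real.rpow_nonneg hr.le _
    have hd2 := denom_lb2 α q₁ lam r hr
    have hlr : lam / 2 ≤ lam - r := by linarith
    have hsq : (lam / 2) ^ 2 ≤ (lam - r) ^ 2 :=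
      pow_le_pow_left₀ (by linarith) hlr 2
    have hDlb : (lam / 2) ^ 2 * Real.sin (α * Real.pi) ^ 2
        ≤ (lam - r) ^ 2 + q₁ ^ 2 * r ^ (2 * α)
          + 2 * (lam - r) * q₁ * r ^ α * Real.cos (α * Real.pi) := by
      nlinarith [sq_nonneg (Real.sin (α * Real.pi))]
    have hnum : 0 ≤ (1 / Real.pi) * (lam * q₁ * r ^ (α - 1) * Real.sin (α * Real.pi)) := by
      positivity
    calc spectralH α q₁ lam r
        = (1 / Real.pi) * (lam * q₁ * r ^ (α - 1) * Real.sin (α * Real.pi)) /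
          ((lam - r) ^ 2 + q₁ ^ 2 * r ^ (2 * α)
            + 2 * (lam - r) * q₁ * r ^ α * Real.cos (α * Real.pi)) := rfl
      _ ≤ (1 / Real.pi) * (lam * q₁ * r ^ (α - 1) * Real.sin (α * Real.pi)) /
          ((lam / 2) ^ 2 * Real.sin (α * Real.pi) ^ 2) :=
          div_le_div_of_nonneg_left hnum (by positivity) hDlb
      _ = lam * q₁ / (Real.pi * (lam / 2) ^ 2 * Real.sin (α * Real.pi)) * r ^ (α - 1) := by
          field_simp
  -- upper bound on [lam/2, ∞)
  have hHub2 : ∀ r : ℝ, lam / 2 ≤ r → spectralH α q₁ lam r ≤ C₂ := by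
    intro r hrl
    have hr : 0 < r := lt_of_lt_of_le (half_pos hlam) hrl
    have hb0 : 0 < r ^ α := Real.rpow_pos_of_pos hr α
    have hb2 : 0 < r ^ (2*α) := Real.rpow_pos_of_pos hr _
    have hd1 := denom_lb1 α q₁ lam r hr
    have hb : 0 ≤ r ^ (α - 1) := Real.rpow_nonneg hr.le _
    have hnum : 0 ≤ (1 / Real.pi) * (lam * q₁ * r ^ (α - 1) * Real.sin (α * Real.pi)) := by
      positivity
    have step1 : spectralH α q₁ lam r
        ≤ (1 / Real.pi) * (lam * q₁ * r ^ (α - 1) * Real.sin (α * Real.pi)) /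
          (q₁ * r ^ α * Real.sin (α * Real.pi)) ^ 2 :=
      div_le_div_of_nonneg_left hnum (by positivity) hd1
    have step2 : (1 / Real.pi) * (lam * q₁ * r ^ (α - 1) * Real.sin (α * Real.pi)) /
          (q₁ * r ^ α * Real.sin (α * Real.pi)) ^ 2
        = lam / (Real.pi * q₁ * Real.sin (α * Real.pi)) * r ^ (-α - 1) := by
      have hre : r ^ (-α - 1) = r ^ (α - 1) / r ^ (2 * α) := by
        rw [← Real.rpow_sub hr]
        congr 1
        ring
      rw [hre, rpow_two_mul hr]
      field_simp
    have step3 : r ^ (-α - 1) ≤ (lam / 2) ^ (-α - 1) :=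
      Real.rpow_le_rpow_of_nonpos (half_pos hlam) hrl (by linarith)
    calc spectralH α q₁ lam r
        ≤ lam / (Real.pi * q₁ * Real.sin (α * Real.pi)) * r ^ (-α - 1) := by
          rw [← step2]; exact step1
      _ ≤ C₂ := by
          rw [hC₂_def]
          exact mul_le_mul_of_nonneg_left step3 (by positivity)
  -- the constant
  set K : ℝ := min 1 (δ * t₀) with hK_def
  have hK0 : 0 < K := lt_min one_pos (by positivity)
  refine ⟨Real.exp (-1) * c' * K ^ α / α,
    div_pos (mul_pos (mul_pos (Real.exp_pos _) hc'0) (Real.rpow_pos_of_pos hK0 α)) hα0, ?_⟩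
  intro t htt
  have ht : 0 < t := lt_of_lt_of_le ht₀ htt
  set f : ℝ → ℝ := fun r => Real.exp (-r * t) * spectralH α q₁ lam r with hf_def
  have hfnn : ∀ r : ℝ, 0 < r → 0 ≤ f r := fun r hr =>
    mul_nonneg (Real.exp_nonneg _) (hHnn r hr)
  have hmeas : Measurable f := by
    rw [hf_def]
    unfold spectralH
    fun_prop
  -- integrability
  have hint1 : IntegrableOn f (Set.Ioc 0 (lam / 2)) := by
    refine Integrable.mono'
      (((intervalIntegral.intervalIntegrable_rpow' (by linarith : (-1:ℝ) < α - 1)).1).const_mul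
        (lam * q₁ / (Real.pi * (lam / 2) ^ 2 * Real.sin (α * Real.pi))))
      hmeas.aestronglyMeasurable ?_
    rw [ae_restrict_iff' measurableSet_Ioc]
    filter_upwards with r hr
    rw [Real.norm_eq_abs, abs_of_nonneg (hfnn r hr.1)]
    have hexp : Real.exp (-r * t) ≤ 1 := Real.exp_le_one_iff.2 (by nlinarith [hr.1, ht])
    calc f r ≤ 1 * spectralH α q₁ lam r :=
          mul_le_mul_of_nonneg_right hexp (hHnn r hr.1)
      _ ≤ lam * q₁ / (Real.pi * (lam / 2) ^ 2 * Real.sin (α * Real.pi)) * r ^ (α - 1) := by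
          rw [one_mul]; exact hHub1 r hr.1 hr.2
  have hint2 : IntegrableOn f (Set.Ioi (lam / 2)) := by
    refine Integrable.mono' ((exp_neg_integrableOn_Ioi (lam / 2) ht).const_mul C₂)
      hmeas.aestronglyMeasurable ?_
    rw [ae_restrict_iff' measurableSet_Ioi]
    filter_upwards with r hr
    have hr0 : 0 < r := lt_of_lt_of_le (half_pos hlam) (le_of_lt hr)
    rw [Real.norm_eq_abs, abs_of_nonneg (hfnn r hr0)]
    show Real.exp (-r * t) * spectralH α q₁ lam r ≤ C₂ * Real.exp (-t * r)
    rw [show -r * t = -t * r by ring, mul_comm C₂ (Real.exp (-t * r))]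
    have hC₂0 : 0 ≤ C₂ := le_trans (hHnn r hr0) (hHub2 r hr.le)
    exact mul_le_mul_of_nonneg_left (hHub2 r hr.le) (Real.exp_nonneg _)
  have hint : IntegrableOn f (Set.Ioi (0:ℝ)) := by
    rw [← Set.Ioc_union_Ioi_eq_Ioi (le_of_lt (half_pos hlam))]
    exact hint1.union hint2
  -- the small interval
  set ε : ℝ := min δ (1 / t) with hε_def
  have hε0 : 0 < ε := lt_min hδ0 (by positivity)
  have hεδ : ε ≤ δ := min_le_left _ _
  have hεt : ε * t ≤ 1 := by
    have h := min_le_right δ (1 / t)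
    rw [← hε_def] at h
    rw [le_div_iff₀ ht] at h
    linarith
  -- step 1 : restrict
  have hstep1 : ∫ r in Set.Ioc 0 ε, f r ≤ ∫ r in Set.Ioi (0:ℝ), f r := by
    refine setIntegral_mono_set hint ?_ ?_
    · rw [Filter.EventuallyLE, ae_restrict_iff' measurableSet_Ioi]
      filter_upwards with r hr
      exact hfnn r hr
    · exact HasSubset.Subset.eventuallyLE Set.Ioc_subset_Ioi_self
  -- step 2 : pointwise lower bound on the small interval
  have hintlb : IntegrableOn (fun r : ℝ => Real.exp (-1) * c' * r ^ (α - 1)) (Set.Ioc 0 ε) :=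
    ((intervalIntegral.intervalIntegrable_rpow' (by linarith : (-1:ℝ) < α - 1)).1).const_mul _
  have hstep2 : ∫ r in Set.Ioc 0 ε, Real.exp (-1) * c' * r ^ (α - 1)
      ≤ ∫ r in Set.Ioc 0 ε, f r := by
    refine setIntegral_mono_on hintlb
      (hint.mono_set (fun x hx => Set.Ioc_subset_Ioi_self hx)) measurableSet_Ioc ?_
    intro r hr
    have hrt : r * t ≤ 1 := by
      have h1 : r * t ≤ ε * t := mul_le_mul_of_nonneg_right hr.2 ht.le
      linarith
    have h1 : Real.exp (-1) ≤ Real.exp (-r * t) := Real.exp_le_exp.2 (by linarith)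
    have h2 : c' * r ^ (α - 1) ≤ spectralH α q₁ lam r := hHlb r hr.1 (le_trans hr.2 hεδ)
    have hb : 0 ≤ r ^ (α - 1) := Real.rpow_nonneg hr.1.le _
    calc Real.exp (-1) * c' * r ^ (α - 1) = Real.exp (-1) * (c' * r ^ (α - 1)) := by ring
      _ ≤ Real.exp (-r * t) * spectralH α q₁ lam r :=
          mul_le_mul h1 h2 (by positivity) (Real.exp_nonneg _)
  -- step 3 : compute the integral
  have hcalc : ∫ r in Set.Ioc 0 ε, Real.exp (-1) * c' * r ^ (α - 1)
      = Real.exp (-1) * c' * (ε ^ α / α) := by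
    rw [show (fun r : ℝ => Real.exp (-1) * c' * r ^ (α - 1))
        = fun r : ℝ => (Real.exp (-1) * c') * r ^ (α - 1) from rfl]
    rw [MeasureTheory.integral_const_mul]
    congr 1
    rw [← intervalIntegral.integral_of_le hε0.le,
      integral_rpow (Or.inl (by linarith : (-1:ℝ) < α - 1))]
    rw [sub_add_cancel]
    rw [Real.zero_rpow (ne_of_gt hα0)]
    ring
  -- step 4 : K/t ≤ ε
  have hKt : K / t ≤ ε := by
    refine le_min ?_ ?_
    · rw [div_le_iff₀ ht]
      calc K ≤ δ * t₀ := min_le_right _ _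
        _ ≤ δ * t := mul_le_mul_of_nonneg_left htt hδ0.le
    · have hK1 : K ≤ 1 := min_le_left _ _
      gcongr
  have hεα : K ^ α * t ^ (-α) ≤ ε ^ α := by
    have h1 : (K / t) ^ α ≤ ε ^ α := Real.rpow_le_rpow (by positivity) hKt hα0.le
    have h2 : (K / t) ^ α = K ^ α * t ^ (-α) := by
      rw [Real.div_rpow hK0.le ht.le, Real.rpow_neg ht.le, div_eq_mul_inv]
    linarith [h2 ▸ h1]
  -- nonnegativity of the whole integral
  have hInn : 0 ≤ ∫ r in Set.Ioi (0:ℝ), f r :=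
    setIntegral_nonneg measurableSet_Ioi (fun r hr => hfnn r hr)
  -- conclude
  have hchain : Real.exp (-1) * c' * K ^ α / α * t ^ (-α) ≤ ∫ r in Set.Ioi (0:ℝ), f r := by
    have hcc : 0 ≤ Real.exp (-1) * c' / α := by positivity
    calc Real.exp (-1) * c' * K ^ α / α * t ^ (-α)
        = Real.exp (-1) * c' / α * (K ^ α * t ^ (-α)) := by ring
      _ ≤ Real.exp (-1) * c' / α * ε ^ α := mul_le_mul_of_nonneg_left hεα hcc
      _ = Real.exp (-1) * c' * (ε ^ α / α) := by ring
      _ = ∫ r in Set.Ioc 0 ε, Real.exp (-1) * c' * r ^ (α - 1) := hcalc.symm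
      _ ≤ ∫ r in Set.Ioc 0 ε, f r := hstep2
      _ ≤ ∫ r in Set.Ioi (0:ℝ), f r := hstep1
  rw [abs_mul, abs_of_nonneg hInn]
  calc Real.exp (-1) * c' * K ^ α / α * |v₀| * t ^ (-α)
      = |v₀| * (Real.exp (-1) * c' * K ^ α / α * t ^ (-α)) := by ring
    _ ≤ |v₀| * ∫ r in Set.Ioi (0:ℝ), f r :=
        mul_le_mul_of_nonneg_left hchain (abs_nonneg _)
end
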